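/- arXiv:1411.5571 — 3 statements merged into one kernel-verified Lean document; each statement's English description precedes it below -/
import Mathlib

section
/- Let ℱ be a nonempty class of real-valued functions on a set 𝒳 that is weak VC-major with dimension d, and let F : ℝ → ℝ be a monotone (nondecreasing or nonincreasing) function. Then the class F∘ℱ = {F∘f : f ∈ ℱ} is weak VC-major with dimension not larger than d. In particular, {−f : f ∈ ℱ} and {max(f,0) : f ∈ ℱ} are weak VC-major with dimensions not larger than d. -/
/-- A class `C` of subsets of `α` shatters a finite set `S` if every subset of `S`
can be obtained by intersecting `S` with an element of `C`. -/
def Shatters {α : Type*} (C : Set (Set α)) (S : Finset α) : Prop :=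
  ∀ T : Finset α, T ⊆ S → ∃ c ∈ C, (S : Set α) ∩ c = (T : Set α)

/-- `C` is a VC-class with dimension at most `k`: it shatters no finite set of
cardinality greater than `k`. -/
def VCDimLE {α : Type*} (C : Set (Set α)) (k : ℕ) : Prop :=
  ∀ S : Finset α, Shatters C S → S.card ≤ k

/-- The class `𝒞ᵤ(F)` of level sets `{x : f(x) > u}` for `f ∈ F`. -/
def levelSets {𝒳 : Type*} (F : Set (𝒳 → ℝ)) (u : ℝ) : Set (Set 𝒳) :=
  {s | ∃ f ∈ F, s = {x | u < f x}}

/-- `F` is weak VC-major with dimension at most `d`: for every `u ∈ ℝ`, the class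
`𝒞ᵤ(F)` is a VC-class with dimension at most `d`. -/
def WeakVCMajorDimLE {𝒳 : Type*} (F : Set (𝒳 → ℝ)) (d : ℕ) : Prop :=
  ∀ u : ℝ, VCDimLE (levelSets F u) d

lemma shatters_of_compl {α : Type*} {C D : Set (Set α)} (h : ∀ s ∈ D, sᶜ ∈ C) {S : Finset α}
    (hS : Shatters D S) : Shatters C S := by
  classical
  intro T hT
  obtain ⟨c, hcD, hc⟩ := hS (S \ T) Finset.sdiff_subset
  refine ⟨cᶜ, h c hcD, ?_⟩
  have hc' : ∀ x, (x ∈ S ∧ x ∈ c) ↔ (x ∈ S ∧ x ∉ T) := by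
    intro x
    have := Set.ext_iff.mp hc x
    simpa using this
  ext x
  simp only [Set.mem_inter_iff, Set.mem_compl_iff, Finset.mem_coe]
  constructor
  · rintro ⟨hxS, hxc⟩
    by_contra hxT
    exact hxc ((hc' x).mpr ⟨hxS, hxT⟩).2
  · intro hxT
    have hxS := hT hxT
    exact ⟨hxS, fun hxc => ((hc' x).mp ⟨hxS, hxc⟩).2 hxT⟩

lemma card_le_ge {𝒳 : Type*} {F : Set (𝒳 → ℝ)} {d : ℕ}
    (hF : WeakVCMajorDimLE F d) (v : ℝ) (S : Finset 𝒳)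
    (hS : Shatters {s | ∃ f ∈ F, s = {x | v ≤ f x}} S) : S.card ≤ d := by
  classical
  have h : ∀ T : Finset 𝒳, T ⊆ S →
      ∃ f, f ∈ F ∧ (S : Set 𝒳) ∩ {x | v ≤ f x} = (T : Set 𝒳) := by
    intro T hT
    obtain ⟨c, ⟨f, hfF, rfl⟩, hc⟩ := hS T hT
    exact ⟨f, hfF, hc⟩
  choose g hgF hgT using h
  set G : Finset 𝒳 → 𝒳 → ℝ := fun T => if h : T ⊆ S then g T h else fun _ => v with hG
  have hGF : ∀ T (hT : T ⊆ S), G T = g T hT := fun T hT => dif_pos hT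
  set D : Finset ℝ := (S.powerset.biUnion (fun T => S.image (G T))).filter (· < v) with hD
  set D' : Finset ℝ := insert (v - 1) D with hD'
  have hDne : D'.Nonempty := ⟨v - 1, Finset.mem_insert_self _ _⟩
  set u : ℝ := D'.max' hDne with hu
  have hulv : u < v := by
    rw [hu, Finset.max'_lt_iff]
    intro b hb
    rcases Finset.mem_insert.mp hb with h1 | h2
    · rw [h1]; linarith
    · exact (Finset.mem_filter.mp h2).2
  have hkey : ∀ T (hT : T ⊆ S), ∀ x ∈ S, (u < G T x ↔ v ≤ G T x) := by
    intro T hT x hx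
    constructor
    · intro hlt
      by_contra hge
      push_neg at hge
      have hmem : G T x ∈ D' := by
        rw [hD']
        refine Finset.mem_insert_of_mem ?_
        rw [hD]
        refine Finset.mem_filter.mpr ⟨?_, hge⟩
        exact Finset.mem_biUnion.mpr ⟨T, Finset.mem_powerset.mpr hT, Finset.mem_image_of_mem _ hx⟩
      exact absurd (Finset.le_max' _ _ hmem) (not_le.mpr hlt)
    · intro hge; linarith
  apply hF u S
  intro T hT
  refine ⟨{x | u < G T x}, ⟨G T, by rw [hGF T hT]; exact hgF T hT, rfl⟩, ?_⟩
  have hgT' : (S : Set 𝒳) ∩ {x | v ≤ G T x} = (T : Set 𝒳) := by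
    rw [hGF T hT]; exact hgT T hT
  ext x
  constructor
  · rintro ⟨hxS, hxc⟩
    have : x ∈ (S : Set 𝒳) ∩ {x | v ≤ G T x} := ⟨hxS, (hkey T hT x hxS).mp hxc⟩
    rw [hgT'] at this; exact this
  · intro hxT
    have hxS : x ∈ (S : Set 𝒳) := hT hxT
    have : x ∈ (S : Set 𝒳) ∩ {x | v ≤ G T x} := by rw [hgT']; exact hxT
    exact ⟨hxS, (hkey T hT x hxS).mpr this.2⟩

lemma card_le_upper {𝒳 : Type*} {F : Set (𝒳 → ℝ)} {d : ℕ}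
    (hF : WeakVCMajorDimLE F d) (U : Set ℝ)
    (hU : ∀ {a b : ℝ}, a ∈ U → a ≤ b → b ∈ U) (S : Finset 𝒳)
    (hS : Shatters {s | ∃ f ∈ F, s = {x | f x ∈ U}} S) : S.card ≤ d := by
  by_cases hne : U.Nonempty
  swap
  · -- U empty
    rw [Set.not_nonempty_iff_eq_empty] at hne
    obtain ⟨c, ⟨f, hfF, rfl⟩, hc⟩ := hS S (le_refl S)
    rw [hne] at hc
    simp only [Set.mem_empty_iff_false, Set.setOf_false, Set.inter_empty] at hc
    have : S = ∅ := Finset.coe_eq_empty.mp hc.symm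
    simp [this]
  by_cases huniv : ∃ t, t ∉ U
  swap
  · push_neg at huniv
    obtain ⟨c, ⟨f, hfF, rfl⟩, hc⟩ := hS ∅ (Finset.empty_subset S)
    simp only [huniv, Set.setOf_true, Set.inter_univ, Finset.coe_empty] at hc
    have : S = ∅ := Finset.coe_eq_empty.mp hc
    simp [this]
  obtain ⟨t0, ht0⟩ := huniv
  have hbdd : BddBelow U := by
    refine ⟨t0, fun s hs => ?_⟩
    by_contra h
    push_neg at h
    exact ht0 (hU hs h.le)
  set v := sInf U with hv
  by_cases hvU : v ∈ U
  · have hUeq : U = Set.Ici v := by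
      ext s
      exact ⟨fun hs => csInf_le hbdd hs, fun hs => hU hvU hs⟩
    rw [hUeq] at hS
    exact card_le_ge hF v S hS
  · have hUeq : U = Set.Ioi v := by
      ext s
      constructor
      · intro hs
        exact lt_of_le_of_ne (csInf_le hbdd hs) (fun e => hvU (by rw [hv, e]; exact hs))
      · intro hs
        obtain ⟨t, htU, hts⟩ := exists_lt_of_csInf_lt hne hs
        exact hU htU hts.le
    rw [hUeq] at hS
    exact hF v S hS

/-- **Proposition 3**: if a nonempty class `F` of real-valued functions on `𝒳` is weak
VC-major with dimension `d`, then for any monotone (nondecreasing or nonincreasing)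
function `φ : ℝ → ℝ`, the class `φ ∘ F = {φ ∘ f : f ∈ F}` is weak VC-major with dimension
not larger than `d`. In particular, `{-f : f ∈ F}` and `{max (f, 0) : f ∈ F}` are weak
VC-major with dimensions not larger than `d`. -/
theorem weakVCMajor_comp_monotone {𝒳 : Type*} (F : Set (𝒳 → ℝ)) (hFne : F.Nonempty)
    (d : ℕ) (hF : IsLeast {k : ℕ | WeakVCMajorDimLE F k} d) :
    (∀ φ : ℝ → ℝ, (Monotone φ ∨ Antitone φ) →
      WeakVCMajorDimLE {g | ∃ f ∈ F, g = φ ∘ f} d)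
    ∧ WeakVCMajorDimLE {g | ∃ f ∈ F, g = fun x => -f x} d
    ∧ WeakVCMajorDimLE {g | ∃ f ∈ F, g = fun x => max (f x) 0} d := by
  have hWF : WeakVCMajorDimLE F d := hF.1
  have part1 : ∀ φ : ℝ → ℝ, (Monotone φ ∨ Antitone φ) →
      WeakVCMajorDimLE {g | ∃ f ∈ F, g = φ ∘ f} d := by
    intro φ hφ u S hS
    set U : Set ℝ := {t | u < φ t} with hUdef
    have hS' : Shatters {s | ∃ f ∈ F, s = {x | f x ∈ U}} S := by
      intro T hT
      obtain ⟨c, ⟨g, ⟨f, hfF, rfl⟩, rfl⟩, hc⟩ := hS T hT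
      exact ⟨{x | f x ∈ U}, ⟨f, hfF, rfl⟩, hc⟩
    rcases hφ with hm | ha
    · exact card_le_upper hWF U (fun {a b} hab h => lt_of_lt_of_le hab (hm h)) S hS'
    · have hS'' : Shatters {s | ∃ f ∈ F, s = {x | f x ∈ Uᶜ}} S := by
        refine shatters_of_compl ?_ hS'
        rintro s ⟨f, hfF, rfl⟩
        exact ⟨f, hfF, rfl⟩
      refine card_le_upper hWF Uᶜ ?_ S hS''
      intro a b hab h hbU
      exact hab (lt_of_lt_of_le hbU (ha h))
  refine ⟨part1, ?_, ?_⟩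
  · exact part1 (fun t => -t) (Or.inr fun _ _ h => neg_le_neg h)
  · exact part1 (fun t => max t 0) (Or.inl fun _ _ h => max_le_max h le_rfl)
end

section
/- Let ε_1,…,ε_n be i.i.d. Rademacher random variables and let T be a finite nonempty subset of ℝ^n. Set v² = max_{t∈T} Σ_{i=1}^n t_i². Then E[ max_{t∈T} |Σ_{i=1}^n ε_i t_i| ] ≤ √( 2 log(2|T|) v² ). -/
/-!
For `l > 0`, Jensen's inequality and `exp (l * |x|) ≤ exp (l * x) + exp (-l * x)` bound
`exp (l * 𝔼 maxᵢ |Xᵢ|)` by `𝔼 exp (l * maxᵢ |Xᵢ|) ≤ 2 |ι| exp (c l² / 2)` for any finite family of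
sub-Gaussian variables with variance proxy `c`; optimising `𝔼 maxᵢ |Xᵢ| ≤ log (2 |ι|) / l + c l / 2`
over `l` gives `√(2 log (2 |ι|) c)`. A Rademacher variable has moment generating function
`cosh u ≤ exp (u² / 2)`, so by independence `∑ᵢ εᵢ tᵢ` is sub-Gaussian with variance proxy
`∑ᵢ tᵢ² ≤ v²`.
-/

open MeasureTheory ProbabilityTheory Real
open scoped NNReal

lemma exp_mul_iSup_abs_le_sum {ι : Type*} [Fintype ι] [Nonempty ι] (f : ι → ℝ) (l : ℝ) :
    exp (l * ⨆ i, |f i|) ≤ ∑ i, (exp (l * f i) + exp (-l * f i)) := by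
  obtain ⟨j, hj⟩ := exists_eq_ciSup_of_finite (f := fun i ↦ |f i|)
  rw [← hj]
  have : exp (l * |f j|) ≤ exp (l * f j) + exp (-l * f j) := by
    rcases abs_cases (f j) with ⟨h, _⟩ | ⟨h, _⟩ <;> rw [h]
    · linarith [exp_pos (-l * f j)]
    · rw [mul_neg, ← neg_mul]; linarith [exp_pos (l * f j)]
  exact this.trans <| Finset.single_le_sum (f := fun i ↦ exp (l * f i) + exp (-l * f i))
    (fun i _ ↦ by positivity) (Finset.mem_univ j)

lemma le_sqrt_of_forall_mul_le {a L c : ℝ} (hL : 0 < L) (hc : 0 ≤ c)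
    (h : ∀ l > 0, l * a ≤ L + c * l ^ 2 / 2) : a ≤ √(2 * L * c) := by
  rcases hc.eq_or_lt with rfl | hc
  · by_contra! ha
    rw [mul_zero, sqrt_zero] at ha
    have := h (2 * L / a) (by positivity)
    rw [div_mul_cancel₀ _ ha.ne'] at this
    linarith
  · set l := √(2 * L / c)
    have hl : 0 < l := sqrt_pos.2 (by positivity)
    have hl2 : l ^ 2 = 2 * L / c := sq_sqrt (by positivity)
    have hsqrt : √(2 * L * c) = l * c := by
      rw [← sqrt_sq (by positivity : 0 ≤ l * c), mul_pow, hl2]; field_simp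
    refine le_of_mul_le_mul_left ?_ hl
    calc l * a ≤ L + c * l ^ 2 / 2 := h l hl
      _ = l * √(2 * L * c) := by rw [hsqrt, ← mul_assoc, ← sq, hl2]; field_simp; ring

namespace ProbabilityTheory

variable {Ω : Type*} {mΩ : MeasurableSpace Ω} {μ : Measure Ω}

lemma HasSubgaussianMGF.mono {X : Ω → ℝ} {c d : ℝ≥0} (h : HasSubgaussianMGF X c μ) (hcd : c ≤ d) :
    HasSubgaussianMGF X d μ where
  integrable_exp_mul := h.integrable_exp_mul
  mgf_le t := (h.mgf_le t).trans <| exp_le_exp.2 <| by gcongr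

section Maximal

variable {ι : Type*} [Fintype ι] {X : ι → Ω → ℝ} {c : ℝ≥0}

lemma integrable_iSup_abs (h : ∀ i, HasSubgaussianMGF (X i) c μ) :
    Integrable (fun ω ↦ ⨆ i, |X i ω|) μ := by
  refine Integrable.mono' (integrable_finsetSum Finset.univ fun i _ ↦ (h i).integrable.abs)
    (AEMeasurable.iSup fun i ↦ (h i).aemeasurable.abs).aestronglyMeasurable
    (ae_of_all _ fun ω ↦ ?_)
  rw [norm_eq_abs, abs_of_nonneg (Real.iSup_nonneg fun i ↦ abs_nonneg _)]
  exact Real.iSup_le (fun j ↦ Finset.single_le_sum (f := fun i ↦ |X i ω|) (fun i _ ↦ abs_nonneg _)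
    (Finset.mem_univ j)) (by positivity)

lemma integrable_exp_mul_add_exp_neg_mul (h : ∀ i, HasSubgaussianMGF (X i) c μ) (l : ℝ) :
    Integrable (fun ω ↦ ∑ i, (exp (l * X i ω) + exp (-l * X i ω))) μ :=
  integrable_finsetSum _ fun i _ ↦ ((h i).integrable_exp_mul l).add ((h i).integrable_exp_mul (-l))

variable [Nonempty ι]

lemma integrable_exp_mul_iSup_abs (h : ∀ i, HasSubgaussianMGF (X i) c μ) (l : ℝ) :
    Integrable (fun ω ↦ exp (l * ⨆ i, |X i ω|)) μ := by
  refine (integrable_exp_mul_add_exp_neg_mul h l).mono' ?_ (ae_of_all _ fun ω ↦ ?_)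
  · exact ((integrable_iSup_abs h).aemeasurable.const_mul l).exp.aestronglyMeasurable
  · rw [norm_eq_abs, abs_of_pos (exp_pos _)]
    exact exp_mul_iSup_abs_le_sum _ l

lemma integral_exp_mul_iSup_abs_le (h : ∀ i, HasSubgaussianMGF (X i) c μ) (l : ℝ) :
    ∫ ω, exp (l * ⨆ i, |X i ω|) ∂μ ≤ 2 * Fintype.card ι * exp (c * l ^ 2 / 2) :=
  calc ∫ ω, exp (l * ⨆ i, |X i ω|) ∂μ
      ≤ ∫ ω, ∑ i, (exp (l * X i ω) + exp (-l * X i ω)) ∂μ :=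
        integral_mono (integrable_exp_mul_iSup_abs h l) (integrable_exp_mul_add_exp_neg_mul h l)
          fun ω ↦ exp_mul_iSup_abs_le_sum _ l
    _ = ∑ i, (mgf (X i) μ l + mgf (X i) μ (-l)) := by
        rw [integral_finsetSum (f := fun i ω ↦ exp (l * X i ω) + exp (-l * X i ω)) _ fun i _ ↦
          ((h i).integrable_exp_mul l).add ((h i).integrable_exp_mul (-l))]
        exact Finset.sum_congr rfl fun i _ ↦
          integral_add ((h i).integrable_exp_mul l) ((h i).integrable_exp_mul (-l))
    _ ≤ ∑ _i : ι, (exp (c * l ^ 2 / 2) + exp (c * l ^ 2 / 2)) := by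
        gcongr with i
        · exact (h i).mgf_le l
        · simpa using (h i).mgf_le (-l)
    _ = 2 * Fintype.card ι * exp (c * l ^ 2 / 2) := by
        rw [Finset.sum_const, Finset.card_univ, nsmul_eq_mul]; ring

variable [IsProbabilityMeasure μ]

lemma mul_integral_iSup_abs_le (h : ∀ i, HasSubgaussianMGF (X i) c μ) (l : ℝ) :
    l * ∫ ω, ⨆ i, |X i ω| ∂μ ≤ log (2 * Fintype.card ι) + c * l ^ 2 / 2 := by
  have jensen : exp (∫ ω, l * ⨆ i, |X i ω| ∂μ) ≤ ∫ ω, exp (l * ⨆ i, |X i ω|) ∂μ :=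
    convexOn_exp.map_integral_le continuous_exp.continuousOn isClosed_univ
      (ae_of_all _ fun _ ↦ Set.mem_univ _) ((integrable_iSup_abs h).const_mul l)
      (integrable_exp_mul_iSup_abs h l)
  rw [integral_const_mul] at jensen
  have hcard : (0 : ℝ) < 2 * Fintype.card ι := by positivity
  rw [← exp_le_exp, exp_add, exp_log hcard]
  exact jensen.trans (integral_exp_mul_iSup_abs_le h l)

omit [Nonempty ι] in
theorem integral_iSup_abs_le_of_hasSubgaussianMGF (h : ∀ i, HasSubgaussianMGF (X i) c μ) :
    ∫ ω, ⨆ i, |X i ω| ∂μ ≤ √(2 * log (2 * Fintype.card ι) * c) := by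
  cases isEmpty_or_nonempty ι
  · simp [Real.iSup_of_isEmpty]
  refine le_sqrt_of_forall_mul_le (log_pos ?_) c.2 fun l _ ↦ mul_integral_iSup_abs_le h l
  have : (1 : ℝ) ≤ Fintype.card ι := by exact_mod_cast Fintype.card_pos
  linarith

end Maximal

def IsRademacher (e : Ω → ℝ) (μ : Measure Ω) : Prop :=
  μ {ω | e ω = 1} = 1 / 2 ∧ μ {ω | e ω = -1} = 1 / 2

namespace IsRademacher

variable [IsProbabilityMeasure μ] {e : Ω → ℝ}

lemma ae_eq_indicator (he : IsRademacher e μ) (hm : Measurable e) (f : ℝ → ℝ) :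
    (fun ω ↦ f (e ω)) =ᵐ[μ] fun ω ↦
      {ω | e ω = 1}.indicator (fun _ ↦ f 1) ω + {ω | e ω = -1}.indicator (fun _ ↦ f (-1)) ω := by
  have hdisj : Disjoint {ω | e ω = 1} {ω | e ω = -1} :=
    Set.disjoint_left.2 fun ω (h1 : e ω = 1) (h2 : e ω = -1) ↦ by norm_num [h1] at h2
  have hone : MeasurableSet {ω | e ω = 1} := hm (measurableSet_singleton 1)
  have hneg : MeasurableSet {ω | e ω = -1} := hm (measurableSet_singleton (-1))
  have hcover : μ ({ω | e ω = 1} ∪ {ω | e ω = -1})ᶜ = 0 := by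
    rw [prob_compl_eq_zero_iff (hone.union hneg), measure_union hdisj hneg, he.1, he.2,
      ENNReal.add_halves]
  filter_upwards [measure_eq_zero_iff_ae_notMem.1 hcover] with ω hω
  rcases not_not.1 hω with (h : e ω = 1) | (h : e ω = -1) <;> norm_num [Set.indicator_apply, h]

lemma integrable_comp (he : IsRademacher e μ) (hm : Measurable e) (f : ℝ → ℝ) :
    Integrable (fun ω ↦ f (e ω)) μ := by
  refine Integrable.congr ?_ (he.ae_eq_indicator hm f).symm
  exact ((integrable_const _).indicator (hm (measurableSet_singleton 1))).add
    ((integrable_const _).indicator (hm (measurableSet_singleton (-1))))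

lemma integral_comp (he : IsRademacher e μ) (hm : Measurable e) (f : ℝ → ℝ) :
    ∫ ω, f (e ω) ∂μ = (f 1 + f (-1)) / 2 := by
  rw [integral_congr_ae (he.ae_eq_indicator hm f), integral_add, integral_indicator_const,
    integral_indicator_const, measureReal_def, measureReal_def, he.1, he.2]
  · simp only [one_div, ENNReal.toReal_inv, ENNReal.toReal_ofNat, smul_eq_mul]; ring
  all_goals first
    | exact hm (measurableSet_singleton _)
    | exact (integrable_const (μ := μ) (_ : ℝ)).indicator (hm (measurableSet_singleton _))

lemma mgf_eq_cosh (he : IsRademacher e μ) (hm : Measurable e) (u : ℝ) : mgf e μ u = cosh u := by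
  rw [mgf, he.integral_comp hm (fun x ↦ exp (u * x)), cosh_eq]
  simp

lemma hasSubgaussianMGF (he : IsRademacher e μ) (hm : Measurable e) : HasSubgaussianMGF e 1 μ where
  integrable_exp_mul u := he.integrable_comp hm (fun x ↦ exp (u * x))
  mgf_le u := by simpa [he.mgf_eq_cosh hm] using cosh_le_exp_half_sq u

end IsRademacher

lemma hasSubgaussianMGF_sum_mul_rademacher [IsProbabilityMeasure μ] {ι : Type*} [Fintype ι]
    {ε : ι → Ω → ℝ} (hm : ∀ i, Measurable (ε i)) (hindep : iIndepFun ε μ)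
    (hε : ∀ i, IsRademacher (ε i) μ) (t : ι → ℝ) :
    HasSubgaussianMGF (fun ω ↦ ∑ i, ε i ω * t i) (∑ i, t i ^ 2).toNNReal μ := by
  have hsum := HasSubgaussianMGF.sum_of_iIndepFun (s := Finset.univ)
    (hindep.comp (fun i x ↦ t i * x) fun i ↦ measurable_const.mul measurable_id)
    fun i _ ↦ ((hε i).hasSubgaussianMGF (hm i)).const_mul (t i)
  convert hsum using 1
  · funext ω
    exact Finset.sum_congr rfl fun i _ ↦ mul_comm _ _
  · ext
    rw [Real.coe_toNNReal _ (Finset.sum_nonneg fun i _ ↦ sq_nonneg (t i)), NNReal.coe_sum]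
    exact Finset.sum_congr rfl fun i _ ↦ (mul_one _).symm

end ProbabilityTheory

theorem rademacher_finite_max_general
    {Ω : Type*} [MeasurableSpace Ω] (P : Measure Ω) [IsProbabilityMeasure P]
    (n : ℕ) (ε : Fin n → Ω → ℝ)
    (hεmeas : ∀ i, Measurable (ε i))
    (hεindep : iIndepFun ε P)
    (hεRad : ∀ i, P {ω | ε i ω = 1} = 1/2 ∧ P {ω | ε i ω = -1} = 1/2)
    (T : Finset (Fin n → ℝ))
    (v2 : ℝ) (hv2 : v2 = ⨆ t : T, ∑ i, ((t : Fin n → ℝ) i)^2) :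
    ∫ ω, (⨆ t : T, |∑ i, ε i ω * (t : Fin n → ℝ) i|) ∂P
      ≤ Real.sqrt (2 * Real.log (2 * T.card) * v2) := by
  have hv2_nonneg : 0 ≤ v2 := hv2 ▸ Real.iSup_nonneg fun t ↦ Finset.sum_nonneg fun i _ ↦ sq_nonneg _
  have hsub (t : T) : HasSubgaussianMGF (fun ω ↦ ∑ i, ε i ω * (t : Fin n → ℝ) i) v2.toNNReal P :=
    (hasSubgaussianMGF_sum_mul_rademacher hεmeas hεindep hεRad t).mono <|
      Real.toNNReal_le_toNNReal <| hv2 ▸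
        le_ciSup (f := fun t : T ↦ ∑ i, ((t : Fin n → ℝ) i) ^ 2) (Set.finite_range _).bddAbove t
  have hmax := integral_iSup_abs_le_of_hasSubgaussianMGF hsub
  rwa [Fintype.card_coe, Real.coe_toNNReal _ hv2_nonneg] at hmax

/-- **Lemma 2**: let `ε₁, …, εₙ` be i.i.d. Rademacher random variables and `T` a finite
nonempty subset of `ℝⁿ`. With `v² = max_{t ∈ T} ∑ᵢ tᵢ²`,
`E[max_{t ∈ T} |∑ᵢ εᵢ tᵢ|] ≤ √(2 log(2 |T|) v²)`. -/
theorem rademacher_finite_max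
    {Ω : Type*} [MeasurableSpace Ω] (P : Measure Ω) [IsProbabilityMeasure P]
    (n : ℕ) (ε : Fin n → Ω → ℝ)
    (hεmeas : ∀ i, Measurable (ε i))
    (hεindep : iIndepFun ε P)
    (hεRad : ∀ i, P {ω | ε i ω = 1} = 1/2 ∧ P {ω | ε i ω = -1} = 1/2)
    (T : Finset (Fin n → ℝ)) (hT : T.Nonempty)
    (v2 : ℝ) (hv2 : v2 = ⨆ t : T, ∑ i, ((t : Fin n → ℝ) i)^2) :
    ∫ ω, (⨆ t : T, |∑ i, ε i ω * (t : Fin n → ℝ) i|) ∂P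
      ≤ Real.sqrt (2 * Real.log (2 * T.card) * v2) :=
  rademacher_finite_max_general P n ε hεmeas hεindep hεRad T v2 hv2
end

section
/- Let X_1,…,X_n be independent random variables with values in a measurable space (𝒳,𝒜), let ε_1,…,ε_n be i.i.d. Rademacher random variables independent of (X_1,…,X_n), and let ℱ be a countable class of measurable functions on 𝒳 with values in [0,1]. Then E[Z̄(ℱ)] ≤ ∫_0^1 E[ sup_{C ∈ 𝒞_u(ℱ)} |Σ_{i=1}^n ε_i 1_C(X_i)| ] du, where 𝒞_u(ℱ) = {{x ∈ 𝒳 : f(x) > u} : f ∈ ℱ}. -/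
open MeasureTheory ProbabilityTheory Real Set

section LayerCake

variable {𝒳 ι : Type*} [Fintype ι]

noncomputable def indicatorSum (w : ι → ℝ) (x : ι → 𝒳) (C : Set 𝒳) : ℝ :=
  ∑ i, w i * C.indicator (fun _ => (1 : ℝ)) (x i)

noncomputable def levelSup (F : Set (𝒳 → ℝ)) (w : ι → ℝ) (x : ι → 𝒳) (u : ℝ) : ℝ :=
  ⨆ f : F, |indicatorSum w x {y | u < (f : 𝒳 → ℝ) y}|

lemma abs_indicatorSum_le (w : ι → ℝ) (x : ι → 𝒳) (C : Set 𝒳) :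
    |indicatorSum w x C| ≤ ∑ i, |w i| := by
  refine (Finset.abs_sum_le_sum_abs _ _).trans (Finset.sum_le_sum fun i _ => ?_)
  rw [abs_mul]
  refine mul_le_of_le_one_right (abs_nonneg _) ?_
  by_cases h : x i ∈ C <;> simp [h]

lemma levelSup_nonneg (F : Set (𝒳 → ℝ)) (w : ι → ℝ) (x : ι → 𝒳) (u : ℝ) :
    0 ≤ levelSup F w x u :=
  Real.iSup_nonneg fun _ => abs_nonneg _

lemma levelSup_le (F : Set (𝒳 → ℝ)) (w : ι → ℝ) (x : ι → 𝒳) (u : ℝ) :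
    levelSup F w x u ≤ ∑ i, |w i| :=
  Real.iSup_le (fun _ => abs_indicatorSum_le w x _) (Finset.sum_nonneg fun _ _ => abs_nonneg _)

lemma abs_levelSup_le (F : Set (𝒳 → ℝ)) (w : ι → ℝ) (x : ι → 𝒳) (u : ℝ) :
    |levelSup F w x u| ≤ ∑ i, |w i| :=
  (abs_of_nonneg (levelSup_nonneg F w x u)).trans_le (levelSup_le F w x u)

lemma iSup_levelSets_eq_levelSup (F : Set (𝒳 → ℝ)) (w : ι → ℝ) (x : ι → 𝒳) (u : ℝ) :
    ⨆ C : levelSets F u, |indicatorSum w x C| = levelSup F w x u := by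
  have himage : levelSets F u = (fun f : 𝒳 → ℝ => {y | u < f y}) '' F := by
    ext
    simp [levelSets, eq_comm]
  calc ⨆ C : levelSets F u, |indicatorSum w x C|
      = sSup ((fun C => |indicatorSum w x C|) '' levelSets F u) :=
        (sSup_image' (s := levelSets F u) (f := fun C => |indicatorSum w x C|)).symm
    _ = sSup ((fun f : 𝒳 → ℝ => |indicatorSum w x {y | u < f y}|) '' F) := by
        rw [himage, image_image]
    _ = levelSup F w x u := sSup_image'

lemma measurable_levelSup {F : Set (𝒳 → ℝ)} (hF : F.Countable) (w : ι → ℝ) (x : ι → 𝒳) :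
    Measurable (levelSup F w x) := by
  have := hF.to_subtype
  exact Measurable.iSup fun f => (Finset.measurable_sum _ fun i _ =>
    (measurable_const.indicator measurableSet_Iio).const_mul _).abs

lemma intervalIntegrable_of_measurable_of_abs_le {g : ℝ → ℝ} (hg : Measurable g) {C : ℝ}
    (hC : ∀ u, |g u| ≤ C) (a b : ℝ) : IntervalIntegrable g volume a b :=
  (intervalIntegrable_const (c := C)).mono_fun' hg.aestronglyMeasurable (ae_of_all _ hC)

lemma intervalIntegral_indicator_Iio {a : ℝ} (ha : a ∈ Icc (0 : ℝ) 1) :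
    ∫ u in (0 : ℝ)..1, (Iio a).indicator (fun _ => (1 : ℝ)) u = a := by
  rw [intervalIntegral.integral_of_le zero_le_one, integral_indicator measurableSet_Iio,
    Measure.restrict_restrict measurableSet_Iio]
  have hinter : Iio a ∩ Ioc 0 1 = Ioo 0 a := by
    ext u
    constructor
    · rintro ⟨hua, hu0, -⟩
      exact ⟨hu0, hua⟩
    · rintro ⟨hu0, hua⟩
      exact ⟨hua, hu0, hua.le.trans ha.2⟩
  rw [hinter, setIntegral_const, smul_eq_mul, mul_one, Real.volume_real_Ioo, sub_zero,
    max_eq_left ha.1]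

lemma sum_mul_eq_integral_indicatorSum (w : ι → ℝ) (x : ι → 𝒳) {f : 𝒳 → ℝ}
    (hf : ∀ i, f (x i) ∈ Icc (0 : ℝ) 1) :
    ∑ i, w i * f (x i) = ∫ u in (0 : ℝ)..1, indicatorSum w x {y | u < f y} := by
  have hint : ∀ i, IntervalIntegrable
      (fun u => w i * {y | u < f y}.indicator (fun _ => (1 : ℝ)) (x i)) volume 0 1 := fun i =>
    (intervalIntegrable_iff.2
      ((integrableOn_const (C := (1 : ℝ)) (by simp)).indicator measurableSet_Iio)).const_mul _
  unfold indicatorSum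
  rw [intervalIntegral.integral_finsetSum fun i _ => hint i]
  refine Finset.sum_congr rfl fun i _ => ?_
  rw [intervalIntegral.integral_const_mul]
  exact congrArg _ (intervalIntegral_indicator_Iio (hf i)).symm

lemma abs_sum_mul_le_integral_levelSup {F : Set (𝒳 → ℝ)} (hF : F.Countable) (w : ι → ℝ)
    (x : ι → 𝒳) {f : 𝒳 → ℝ} (hfF : f ∈ F) (hf : ∀ i, f (x i) ∈ Icc (0 : ℝ) 1) :
    |∑ i, w i * f (x i)| ≤ ∫ u in (0 : ℝ)..1, levelSup F w x u := by
  have hbdd : ∀ u, BddAbove (range fun g : F => |indicatorSum w x {y | u < (g : 𝒳 → ℝ) y}|) :=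
    fun u => ⟨∑ i, |w i|, by rintro _ ⟨g, rfl⟩; exact abs_indicatorSum_le w x _⟩
  have hmeas : Measurable fun u => indicatorSum w x {y | u < f y} :=
    Finset.measurable_sum _ fun i _ => (measurable_const.indicator measurableSet_Iio).const_mul _
  have hint : IntervalIntegrable (fun u => indicatorSum w x {y | u < f y}) volume 0 1 :=
    intervalIntegrable_of_measurable_of_abs_le hmeas (fun _ => abs_indicatorSum_le w x _) 0 1
  have hint_sup : IntervalIntegrable (levelSup F w x) volume 0 1 :=
    intervalIntegrable_of_measurable_of_abs_le (measurable_levelSup hF w x)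
      (abs_levelSup_le F w x) 0 1
  rw [sum_mul_eq_integral_indicatorSum w x hf]
  calc |∫ u in (0 : ℝ)..1, indicatorSum w x {y | u < f y}|
      ≤ ∫ u in (0 : ℝ)..1, |indicatorSum w x {y | u < f y}| :=
        intervalIntegral.abs_integral_le_integral_abs zero_le_one
    _ ≤ ∫ u in (0 : ℝ)..1, levelSup F w x u :=
        intervalIntegral.integral_mono_on zero_le_one hint.abs hint_sup
          fun u _ => le_ciSup (hbdd u) ⟨f, hfF⟩

lemma iSup_abs_sum_mul_le_integral_levelSup {F : Set (𝒳 → ℝ)} (hF : F.Countable)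
    (hFrange : ∀ f ∈ F, ∀ y, f y ∈ Icc (0 : ℝ) 1) (w : ι → ℝ) (x : ι → 𝒳) :
    ⨆ f : F, |∑ i, w i * (f : 𝒳 → ℝ) (x i)| ≤ ∫ u in (0 : ℝ)..1, levelSup F w x u :=
  Real.iSup_le (fun f => abs_sum_mul_le_integral_levelSup hF w x f.2 fun _ => hFrange f f.2 _)
    (intervalIntegral.integral_nonneg zero_le_one fun u _ => levelSup_nonneg F w x u)

end LayerCake

section Expectation

variable {Ω 𝒳 ι : Type*} [MeasurableSpace Ω] [MeasurableSpace 𝒳] [Fintype ι]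

lemma measurable_levelSup_uncurry {F : Set (𝒳 → ℝ)} (hF : F.Countable)
    (hFmeas : ∀ f ∈ F, Measurable f) {w : ι → Ω → ℝ} {X : ι → Ω → 𝒳}
    (hw : ∀ i, Measurable (w i)) (hX : ∀ i, Measurable (X i)) :
    Measurable fun p : ℝ × Ω => levelSup F (w · p.2) (X · p.2) p.1 := by
  have := hF.to_subtype
  refine Measurable.iSup fun f => (Finset.measurable_sum _ fun i _ => ?_).abs
  have hlevel : MeasurableSet {p : ℝ × Ω | p.1 < (f : 𝒳 → ℝ) (X i p.2)} :=
    measurableSet_lt measurable_fst ((hFmeas f f.2).comp ((hX i).comp measurable_snd))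
  exact ((hw i).comp measurable_snd).mul (measurable_const.indicator hlevel)

theorem integral_iSup_abs_sum_mul_le_integral_levelSup {P : Measure Ω} [SFinite P]
    {F : Set (𝒳 → ℝ)} (hF : F.Countable) (hFmeas : ∀ f ∈ F, Measurable f)
    (hFrange : ∀ f ∈ F, ∀ y, f y ∈ Icc (0 : ℝ) 1) {w : ι → Ω → ℝ} {X : ι → Ω → 𝒳}
    (hw : ∀ i, Measurable (w i)) (hw_int : ∀ i, Integrable (w i) P)
    (hX : ∀ i, Measurable (X i)) :
    ∫ ω, ⨆ f : F, |∑ i, w i ω * (f : 𝒳 → ℝ) (X i ω)| ∂P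
      ≤ ∫ u in (0 : ℝ)..1, ∫ ω, levelSup F (w · ω) (X · ω) u ∂P := by
  have : IsFiniteMeasure (volume.restrict (uIoc (0 : ℝ) 1)) :=
    isFiniteMeasure_restrict.2 measure_Ioc_lt_top.ne
  have hint : Integrable (Function.uncurry fun u ω => levelSup F (w · ω) (X · ω) u)
      ((volume.restrict (uIoc 0 1)).prod P) := by
    have hbound := (integrable_finsetSum Finset.univ fun i _ => (hw_int i).abs).comp_snd
      (volume.restrict (uIoc (0 : ℝ) 1))
    exact hbound.mono' (measurable_levelSup_uncurry hF hFmeas hw hX).aestronglyMeasurable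
      (ae_of_all _ fun _ => abs_levelSup_le ..)
  have hint_inner : Integrable (fun ω => ∫ u in (0 : ℝ)..1, levelSup F (w · ω) (X · ω) u) P := by
    simpa only [Function.uncurry_apply_pair, uIoc_of_le zero_le_one,
      ← intervalIntegral.integral_of_le zero_le_one]
      using hint.integral_prod_right
  rw [intervalIntegral_integral_swap hint]
  exact integral_mono_of_nonneg (ae_of_all _ fun _ => Real.iSup_nonneg fun _ => abs_nonneg _)
    hint_inner (ae_of_all _ fun _ => iSup_abs_sum_mul_le_integral_levelSup hF hFrange _ _)

end Expectation

lemma ae_abs_eq_one_of_rademacher {Ω : Type*} [MeasurableSpace Ω] {P : Measure Ω}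
    [IsProbabilityMeasure P] {ε : Ω → ℝ} (hε : Measurable ε)
    (hRad : P {ω | ε ω = 1} = 1 / 2 ∧ P {ω | ε ω = -1} = 1 / 2) :
    ∀ᵐ ω ∂P, |ε ω| = 1 := by
  have hsplit : {ω | |ε ω| = 1} = {ω | ε ω = 1} ∪ {ω | ε ω = -1} := by
    ext ω
    simp [abs_eq zero_le_one]
  have hdisj : Disjoint {ω | ε ω = 1} {ω | ε ω = -1} := by
    rw [disjoint_left]
    intro ω h1 h2
    norm_num [mem_ofPred_eq.mp h1] at h2
  rw [ae_iff_measure_eq (measurableSet_eq_fun hε.abs measurable_const).nullMeasurableSet, hsplit,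
    measure_union hdisj (hε (measurableSet_singleton _)), hRad.1, hRad.2, measure_univ,
    ENNReal.add_halves]

lemma integrable_of_rademacher {Ω : Type*} [MeasurableSpace Ω] {P : Measure Ω}
    [IsProbabilityMeasure P] {ε : Ω → ℝ} (hε : Measurable ε)
    (hRad : P {ω | ε ω = 1} = 1 / 2 ∧ P {ω | ε ω = -1} = 1 / 2) :
    Integrable ε P :=
  Integrable.of_bound hε.aestronglyMeasurable 1 <| by
    filter_upwards [ae_abs_eq_one_of_rademacher hε hRad] with ω hω
    rw [Real.norm_eq_abs, hω]

theorem expectation_sup_rademacher_layer_bound_general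
    {Ω 𝒳 : Type*} [MeasurableSpace Ω] [MeasurableSpace 𝒳]
    (P : Measure Ω) [IsProbabilityMeasure P]
    (n : ℕ) (X : Fin n → Ω → 𝒳)
    (hXmeas : ∀ i, Measurable (X i))
    (ε : Fin n → Ω → ℝ)
    (hεmeas : ∀ i, Measurable (ε i))
    (hεRad : ∀ i, P {ω | ε i ω = 1} = 1/2 ∧ P {ω | ε i ω = -1} = 1/2)
    (F : Set (𝒳 → ℝ)) (hFc : F.Countable)
    (hFmeas : ∀ f ∈ F, Measurable f)
    (hFrange : ∀ f ∈ F, ∀ x, f x ∈ Icc (0:ℝ) 1) :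
    ∫ ω, (⨆ f : F, |∑ i, ε i ω * (f : 𝒳 → ℝ) (X i ω)|) ∂P
      ≤ ∫ u in (0:ℝ)..(1:ℝ),
          ∫ ω, (⨆ C : levelSets F u,
            |∑ i, ε i ω * Set.indicator (C : Set 𝒳) (fun _ => (1:ℝ)) (X i ω)|) ∂P := by
  have hε_int : ∀ i, Integrable (ε i) P := fun i => integrable_of_rademacher (hεmeas i) (hεRad i)
  refine (integral_iSup_abs_sum_mul_le_integral_levelSup hFc hFmeas hFrange hεmeas hε_int
    hXmeas).trans_eq ?_
  refine intervalIntegral.integral_congr fun u _ => integral_congr_ae (ae_of_all _ fun ω => ?_)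
  exact (iSup_levelSets_eq_levelSup F _ _ u).symm

/-- **Key inequality in the proof of Theorems 1 and 2**: `X₁, …, Xₙ` are independent
random variables with values in `𝒳`, `ε₁, …, εₙ` are i.i.d. Rademacher variables
independent of `(X₁, …, Xₙ)`, and `F` is a countable class of measurable `[0,1]`-valued
functions on `𝒳`. Then
`E[Z̄(F)] ≤ ∫₀¹ E[sup_{C ∈ 𝒞ᵤ(F)} |∑ᵢ εᵢ 1_C(Xᵢ)|] du`. -/
theorem expectation_sup_rademacher_layer_bound
    {Ω 𝒳 : Type*} [MeasurableSpace Ω] [MeasurableSpace 𝒳]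
    (P : Measure Ω) [IsProbabilityMeasure P]
    (n : ℕ) (X : Fin n → Ω → 𝒳)
    (hXmeas : ∀ i, Measurable (X i))
    (hXindep : iIndepFun X P)
    (ε : Fin n → Ω → ℝ)
    (hεmeas : ∀ i, Measurable (ε i))
    (hεindep : iIndepFun ε P)
    (hεRad : ∀ i, P {ω | ε i ω = 1} = 1/2 ∧ P {ω | ε i ω = -1} = 1/2)
    (hεX : IndepFun (fun ω i => ε i ω) (fun ω i => X i ω) P)
    (F : Set (𝒳 → ℝ)) (hFc : F.Countable) (hFne : F.Nonempty)
    (hFmeas : ∀ f ∈ F, Measurable f)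
    (hFrange : ∀ f ∈ F, ∀ x, f x ∈ Icc (0:ℝ) 1) :
    ∫ ω, (⨆ f : F, |∑ i, ε i ω * (f : 𝒳 → ℝ) (X i ω)|) ∂P
      ≤ ∫ u in (0:ℝ)..(1:ℝ),
          ∫ ω, (⨆ C : levelSets F u,
            |∑ i, ε i ω * Set.indicator (C : Set 𝒳) (fun _ => (1:ℝ)) (X i ω)|) ∂P :=
  expectation_sup_rademacher_layer_bound_general P n X hXmeas ε hεmeas hεRad F hFc hFmeas hFrange
end
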